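/- arXiv:2403.03197 — 2 statements merged into one kernel-verified Lean document; each statement's English description precedes it below -/
import Mathlib

section
/- Let n, h, k ≥ 1 be integers, d = (0,−1,1) and e = (1,0,0). Let {(r^(i,j), t^(i,j), ℓ^(i,j), b^(i,j))}_{1≤i≤h, 1≤j≤k} be a family of tiles in 𝒞_n forming a valid tiling of an h × k rectangle (r^(i,j) = ℓ^(i+1,j) for 1 ≤ i ≤ h−1 and t^(i,j) = b^(i,j+1) for 1 ≤ j ≤ k−1), with averages R = (1/k)·Σ_j r^(h,j), T = (1/h)·Σ_i t^(i,k), L = (1/k)·Σ_j ℓ^(1,j), B = (1/h)·Σ_i b^(i,1) in ℚ³. If the tiling is cylindrical, i.e., L = R, then ⟨(1/n)d, T⟩ ≡ ⟨(1/n)d, B⟩ − k·⟨e, B⟩ (mod 1), that is, ⟨(1/n)d, T⟩ − ⟨(1/n)d, B⟩ + k·⟨e, B⟩ is an integer. -/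
open scoped BigOperators

namespace MetallicMean

/-- A 3-dimensional integer vector. -/
abbrev Vec3 := ℤ × ℤ × ℤ

/-- A Wang tile is a quadruple (right, top, left, bottom) of labels. -/
abbrev Tile := Vec3 × Vec3 × Vec3 × Vec3

def right (τ : Tile) : Vec3 := τ.1
def top (τ : Tile) : Vec3 := τ.2.1
def left (τ : Tile) : Vec3 := τ.2.2.1
def bottom (τ : Tile) : Vec3 := τ.2.2.2

/-- Reflection of a tile by the positive diagonal: (r,t,ℓ,b) ↦ (t,r,b,ℓ). -/
def reflect (τ : Tile) : Tile := (top τ, right τ, bottom τ, left τ)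

/-- The set V_n of admissible labels. -/
def Vset (n : ℤ) : Set Vec3 :=
  {v | 0 ≤ v.1 ∧ v.1 ≤ v.2.1 ∧ v.2.1 ≤ v.2.2 ∧ v.2.2 ≤ n + 1 ∧ v.2.1 ≤ 1}

/-- The function θ_n. -/
def theta (n : ℤ) (u v : Vec3) : Vec3 :=
  (u.1,
   if u.1 = 0 then v.2.2 - n else 1,
   if v.1 = 0 then v.2.1 + u.1 else u.2.2 + 1)

/-- The set 𝒞_n of instances of the θ_n-chip. -/
def Cset (n : ℤ) : Set Tile :=
  {τ | ∃ u v : Vec3, u ∈ Vset n ∧ v ∈ Vset n ∧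
      theta n u v ∈ Vset n ∧ theta n v u ∈ Vset n ∧
      τ = (theta n u v, theta n v u, u, v)}

/-- The n-th metallic mean β, the positive root of x² - nx - 1. -/
noncomputable def beta (n : ℤ) : ℝ := ((n : ℝ) + Real.sqrt ((n : ℝ) ^ 2 + 4)) / 2

/-- The conjugate root β* = n - β = -β⁻¹. -/
noncomputable def betaStar (n : ℤ) : ℝ := (n : ℝ) - beta n

/-- The coding map Λ_n. -/
noncomputable def Lam (n : ℤ) (x y : ℝ) : Vec3 :=
  (⌊y + betaStar n + 1⌋,
   ⌊(beta n)⁻¹ * x + y + betaStar n + 1⌋,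
   ⌊beta n * x + y + betaStar n + 1⌋)

/-- The Wang tile TILE_n(x, y), written as (right, top, left, bottom). -/
noncomputable def TileAt (n : ℤ) (x y : ℝ) : Tile :=
  (Lam n (Int.fract x) (Int.fract y),
   Lam n (Int.fract y) (Int.fract x),
   Lam n (Int.fract (x + betaStar n)) (Int.fract y),
   Lam n (Int.fract (y + betaStar n)) (Int.fract x))

/-- The metallic mean Wang tile set 𝒯_n = {TILE_n(x,y) : (x,y) ∈ [0,1]²}. -/
def Tset (n : ℤ) : Set Tile :=
  {τ | ∃ x y : ℝ, x ∈ Set.Icc (0 : ℝ) 1 ∧ y ∈ Set.Icc (0 : ℝ) 1 ∧ τ = TileAt n x y}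

/-- A configuration assigns a tile to every position of ℤ². -/
abbrev Config := ℤ × ℤ → Tile

/-- A configuration is valid w.r.t. a set `S` of Wang tiles if all its tiles are in `S`
and contiguous edges of adjacent tiles match. -/
def IsValid (S : Set Tile) (w : Config) : Prop :=
  (∀ p : ℤ × ℤ, w p ∈ S) ∧
  ∀ p : ℤ × ℤ,
    right (w p) = left (w (p + (1, 0))) ∧
    top (w p) = bottom (w (p + (0, 1)))

/-- The Wang shift Ω_S of all valid configurations over `S`. -/
def OmegaOf (S : Set Tile) : Set Config := {w | IsValid S w}

/-- The shift ℤ²-action on configurations: (σ^k w)(p) = w(p + k). -/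
def shift (k : ℤ × ℤ) (w : Config) : Config := fun p => w (p + k)

end MetallicMean

namespace MetallicMean

/-- Rational 3-dimensional vectors. -/
abbrev Vec3Q := ℚ × ℚ × ℚ

/-- Cast an integer vector to a rational vector. -/
def toQ (v : Vec3) : Vec3Q := ((v.1 : ℚ), (v.2.1 : ℚ), (v.2.2 : ℚ))

/-- The canonical inner product on ℚ³. -/
def dotQ (a b : Vec3Q) : ℚ := a.1 * b.1 + a.2.1 * b.2.1 + a.2.2 * b.2.2

/-- The vector d = (0, -1, 1). -/
def dQ : Vec3Q := (0, -1, 1)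

/-- The vector e = (1, 0, 0). -/
def eQ : Vec3Q := (1, 0, 0)

end MetallicMean


/-!
Give a label `w` the potential `⟨(1/n) d, w⟩ = (w₂ - w₁)/n`. A case check on the first
coordinates `u₀, v₀ ∈ {0, 1}` shows that on every tile of `𝒞_n` the vertical increment of the
potential differs from the horizontal one by `ℓ₀ - b₀`. Summing over the rectangle, the
increments telescope to the boundary; the horizontal part vanishes because the tiling is
cylindrical. Since every tile has `r₀ = ℓ₀` and `t₀ = b₀`, the first coordinate of the left
labels is constant along rows and that of the bottom labels along columns, so the sum of
`ℓ₀ - b₀` is `h ∑ⱼ ℓ₀^(1,j) - k ∑ᵢ b₀^(i,1)`. Dividing by `h` gives the congruence.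
-/

namespace MetallicMean

open Finset

section Telescoping

lemma sum_Icc_sub_telescope {M : Type*} [AddCommGroup M] {k : ℤ} (hk : 1 ≤ k) (a b : ℤ → M)
    (hab : ∀ j, 1 ≤ j → j ≤ k - 1 → a j = b (j + 1)) :
    ∑ j ∈ Icc 1 k, (a j - b j) = a k - b 1 := by
  induction k, hk using Int.leInduction with
  | base => simp
  | succ m hm ih =>
    have hIcc : Icc 1 (m + 1) = insert (m + 1) (Icc 1 m) := by
      ext x; simp only [mem_Icc, mem_insert]; omega
    rw [hIcc, sum_insert (by simp), ih fun j hj1 hj2 => hab j hj1 (by omega),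
      hab m hm (by omega)]
    abel

lemma eq_at_one_of_chain {α : Type*} {k : ℤ} {a b : ℤ → α}
    (hab : ∀ j, 1 ≤ j → j ≤ k - 1 → a j = b (j + 1)) (hba : ∀ j, 1 ≤ j → j ≤ k → a j = b j)
    {j : ℤ} (hj : 1 ≤ j) (hjk : j ≤ k) : b j = b 1 := by
  induction j, hj using Int.leInduction with
  | base => rfl
  | succ m hm ih => rw [← hab m hm (by omega), hba m hm (by omega), ih (by omega)]

lemma sum_Icc_eq_mul_of_chain {k : ℤ} (hk : 0 ≤ k) {a b : ℤ → ℚ}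
    (hab : ∀ j, 1 ≤ j → j ≤ k - 1 → a j = b (j + 1)) (hba : ∀ j, 1 ≤ j → j ≤ k → a j = b j) :
    ∑ j ∈ Icc 1 k, b j = k * b 1 := by
  rw [sum_congr rfl fun j hj => eq_at_one_of_chain hab hba (mem_Icc.1 hj).1 (mem_Icc.1 hj).2,
    sum_const, Int.card_Icc, nsmul_eq_mul, add_sub_cancel_right, ← Int.cast_natCast,
    Int.toNat_of_nonneg hk]

/-- Discrete Green formula. -/
lemma sum_boundary_eq_sum_tiles {M : Type*} [AddCommGroup M] {h k : ℤ} (hh : 1 ≤ h)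
    (hk : 1 ≤ k) (R T L B : ℤ → ℤ → M)
    (hhoriz : ∀ i j, 1 ≤ i → i ≤ h - 1 → 1 ≤ j → j ≤ k → R i j = L (i + 1) j)
    (hvert : ∀ i j, 1 ≤ i → i ≤ h → 1 ≤ j → j ≤ k - 1 → T i j = B i (j + 1)) :
    ∑ i ∈ Icc 1 h, (T i k - B i 1) - ∑ j ∈ Icc 1 k, (R h j - L 1 j) =
      ∑ i ∈ Icc 1 h, ∑ j ∈ Icc 1 k, ((T i j - B i j) - (R i j - L i j)) := by
  have hcols : ∀ i ∈ Icc 1 h, ∑ j ∈ Icc 1 k, (T i j - B i j) = T i k - B i 1 := fun i hi =>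
    sum_Icc_sub_telescope hk _ _ fun j hj1 hj2 =>
      hvert i j (mem_Icc.1 hi).1 (mem_Icc.1 hi).2 hj1 hj2
  have hrows : ∀ j ∈ Icc 1 k, ∑ i ∈ Icc 1 h, (R i j - L i j) = R h j - L 1 j := fun j hj =>
    sum_Icc_sub_telescope hh (R · j) (L · j) fun i hi1 hi2 =>
      hhoriz i j hi1 hi2 (mem_Icc.1 hj).1 (mem_Icc.1 hj).2
  rw [← sum_congr rfl hcols, ← sum_congr rfl hrows, sum_comm (s := Icc 1 k)]
  simp only [← sum_sub_distrib]

end Telescoping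

lemma dotQ_smul (a : Vec3Q) (c : ℚ) (b : Vec3Q) : dotQ a (c • b) = c * dotQ a b := by
  simp only [dotQ, Prod.smul_fst, Prod.smul_snd, smul_eq_mul]; ring

lemma dotQ_sum {ι : Type*} (a : Vec3Q) (s : Finset ι) (f : ι → Vec3Q) :
    dotQ a (∑ j ∈ s, f j) = ∑ j ∈ s, dotQ a (f j) := by
  simp [dotQ, Prod.fst_sum, Prod.snd_sum, mul_sum, sum_add_distrib]

lemma dotQ_eQ_toQ (w : Vec3) : dotQ eQ (toQ w) = w.1 := by
  simp [dotQ, eQ, toQ]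

def dPot (n : ℤ) (w : Vec3) : ℚ := dotQ ((1 / (n : ℚ)) • dQ) (toQ w)

lemma dPot_eq (n : ℤ) (w : Vec3) : dPot n w = (w.2.2 - w.2.1) / n := by
  simp only [dPot, dotQ, dQ, toQ, Prod.smul_fst, Prod.smul_snd, smul_eq_mul]; ring

section Chip

variable {n : ℤ} {τ : Tile}

lemma fst_right_eq_fst_left (hτ : τ ∈ Cset n) : (right τ).1 = (left τ).1 := by
  obtain ⟨u, v, -, -, -, -, rfl⟩ := hτ
  rfl

lemma fst_top_eq_fst_bottom (hτ : τ ∈ Cset n) : (top τ).1 = (bottom τ).1 := by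
  obtain ⟨u, v, -, -, -, -, rfl⟩ := hτ
  rfl

lemma Vset_fst_cases {v : Vec3} (hv : v ∈ Vset n) : v.1 = 0 ∨ v.1 = 1 ∧ v.2.1 = 1 := by
  obtain ⟨h0, h1, -, -, h4⟩ := hv
  omega

lemma dPot_balance (hn : n ≠ 0) (hτ : τ ∈ Cset n) :
    (dPot n (top τ) - dPot n (bottom τ)) - (dPot n (right τ) - dPot n (left τ)) =
      (left τ).1 - (bottom τ).1 := by
  obtain ⟨⟨u₀, u₁, u₂⟩, ⟨v₀, v₁, v₂⟩, hu, hv, -, -, rfl⟩ := hτ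
  have hn' : (n : ℚ) ≠ 0 := by exact_mod_cast hn
  simp only [dPot_eq, right, top, left, bottom, theta]
  rcases Vset_fst_cases hu with rfl | ⟨rfl, rfl⟩ <;>
  rcases Vset_fst_cases hv with rfl | ⟨rfl, rfl⟩ <;>
  simp only [if_true, one_ne_zero, if_false] <;>
  push_cast <;> field_simp <;> ring

end Chip

section Rectangle

variable {n h k : ℤ} {tile : ℤ → ℤ → Tile}

lemma sum_fst_left_sub_fst_bottom (hh : 0 ≤ h) (hk : 0 ≤ k)
    (htile : ∀ i j, 1 ≤ i → i ≤ h → 1 ≤ j → j ≤ k → tile i j ∈ Cset n)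
    (hhoriz : ∀ i j, 1 ≤ i → i ≤ h - 1 → 1 ≤ j → j ≤ k →
      right (tile i j) = left (tile (i + 1) j))
    (hvert : ∀ i j, 1 ≤ i → i ≤ h → 1 ≤ j → j ≤ k - 1 →
      top (tile i j) = bottom (tile i (j + 1))) :
    ∑ i ∈ Icc 1 h, ∑ j ∈ Icc 1 k, (((left (tile i j)).1 : ℚ) - (bottom (tile i j)).1) =
      h * ∑ j ∈ Icc 1 k, ((left (tile 1 j)).1 : ℚ) -
        k * ∑ i ∈ Icc 1 h, ((bottom (tile i 1)).1 : ℚ) := by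
  have hrows : ∀ j ∈ Icc 1 k,
      ∑ i ∈ Icc 1 h, ((left (tile i j)).1 : ℚ) = h * (left (tile 1 j)).1 :=
    fun j hj => sum_Icc_eq_mul_of_chain (a := fun i => ((right (tile i j)).1 : ℚ)) hh
      (fun i hi1 hi2 => by rw [hhoriz i j hi1 hi2 (mem_Icc.1 hj).1 (mem_Icc.1 hj).2])
      (fun i hi1 hi2 => by
        rw [fst_right_eq_fst_left (htile i j hi1 hi2 (mem_Icc.1 hj).1 (mem_Icc.1 hj).2)])
  have hcols : ∀ i ∈ Icc 1 h,
      ∑ j ∈ Icc 1 k, ((bottom (tile i j)).1 : ℚ) = k * (bottom (tile i 1)).1 :=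
    fun i hi => sum_Icc_eq_mul_of_chain (a := fun j => ((top (tile i j)).1 : ℚ)) hk
      (fun j hj1 hj2 => by rw [hvert i j (mem_Icc.1 hi).1 (mem_Icc.1 hi).2 hj1 hj2])
      (fun j hj1 hj2 => by
        rw [fst_top_eq_fst_bottom (htile i j (mem_Icc.1 hi).1 (mem_Icc.1 hi).2 hj1 hj2)])
  simp only [sum_sub_distrib]
  rw [sum_comm (s := Icc 1 h), sum_congr rfl hrows, sum_congr rfl hcols, mul_sum, mul_sum]

end Rectangle

/-- For a valid cylindrical h × k rectangular tiling (L = R) by tiles of 𝒞_n,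
the averages of the top and bottom labels satisfy
⟨(1/n)d, T⟩ ≡ ⟨(1/n)d, B⟩ - k·⟨e, B⟩ (mod 1). -/
theorem statement6 (n h k : ℤ) (hn : 1 ≤ n) (hh : 1 ≤ h) (hk : 1 ≤ k)
    (tile : ℤ → ℤ → Tile)
    (htile : ∀ i j : ℤ, 1 ≤ i → i ≤ h → 1 ≤ j → j ≤ k → tile i j ∈ Cset n)
    (hhoriz : ∀ i j : ℤ, 1 ≤ i → i ≤ h - 1 → 1 ≤ j → j ≤ k →
      right (tile i j) = left (tile (i + 1) j))
    (hvert : ∀ i j : ℤ, 1 ≤ i → i ≤ h → 1 ≤ j → j ≤ k - 1 →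
      top (tile i j) = bottom (tile i (j + 1)))
    (hcyl : (1 / (k : ℚ)) • ∑ j ∈ Finset.Icc 1 k, toQ (left (tile 1 j)) =
      (1 / (k : ℚ)) • ∑ j ∈ Finset.Icc 1 k, toQ (right (tile h j))) :
    ∃ m : ℤ,
      dotQ ((1 / (n : ℚ)) • dQ) ((1 / (h : ℚ)) • ∑ i ∈ Finset.Icc 1 h, toQ (top (tile i k))) -
        dotQ ((1 / (n : ℚ)) • dQ) ((1 / (h : ℚ)) • ∑ i ∈ Finset.Icc 1 h, toQ (bottom (tile i 1))) +
        (k : ℚ) * dotQ eQ ((1 / (h : ℚ)) • ∑ i ∈ Finset.Icc 1 h, toQ (bottom (tile i 1))) =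
      (m : ℚ) := by
  have hcyl' : ∑ j ∈ Icc 1 k, (dPot n (right (tile h j)) - dPot n (left (tile 1 j))) = 0 := by
    have hsum := congrArg (dotQ ((1 / (n : ℚ)) • dQ))
      (smul_right_injective Vec3Q (one_div_ne_zero (by exact_mod_cast (by omega : k ≠ 0))) hcyl)
    rw [dotQ_sum, dotQ_sum] at hsum
    rw [sum_sub_distrib, sub_eq_zero]
    exact hsum.symm
  have hgreen := sum_boundary_eq_sum_tiles hh hk
    (fun i j => dPot n (right (tile i j))) (fun i j => dPot n (top (tile i j)))
    (fun i j => dPot n (left (tile i j))) (fun i j => dPot n (bottom (tile i j)))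
    (fun i j hi1 hi2 hj1 hj2 => by simp only [hhoriz i j hi1 hi2 hj1 hj2])
    (fun i j hi1 hi2 hj1 hj2 => by simp only [hvert i j hi1 hi2 hj1 hj2])
  rw [hcyl', sub_zero, sum_congr rfl fun i hi => sum_congr rfl fun j hj =>
    dPot_balance (by omega) (htile i j (mem_Icc.1 hi).1 (mem_Icc.1 hi).2 (mem_Icc.1 hj).1
      (mem_Icc.1 hj).2), sum_fst_left_sub_fst_bottom (by omega) (by omega) htile hhoriz hvert]
    at hgreen
  refine ⟨∑ j ∈ Icc 1 k, (left (tile 1 j)).1, ?_⟩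
  simp only [dPot, dotQ_smul, dotQ_sum, dotQ_eQ_toQ, sum_sub_distrib] at hgreen ⊢
  push_cast
  field_simp
  linear_combination hgreen

end MetallicMean
end

section
/- For every integer n ≥ 1, the metallic mean Wang tile set equals the image of the square under the tile map: 𝒯_n = {TILE_n(x,y) : (x,y) ∈ [0,1]²}. -/
open scoped BigOperators

namespace MetallicMean

/-- White tiles. -/
def whiteT (n : ℤ) : Set Tile :=
  {τ | ∃ i j : ℤ, 1 ≤ i ∧ i ≤ n ∧ 1 ≤ j ∧ j ≤ n ∧
    τ = ((1, 1, i + 1), (1, 1, j + 1), (1, 1, i), (1, 1, j))}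

/-- Horizontal blue tiles (0 ≤ i ≤ n - 1). -/
def blueHT (n : ℤ) : Set Tile :=
  {τ | ∃ i : ℤ, 0 ≤ i ∧ i ≤ n - 1 ∧
    τ = ((0, 0, i + 1), (1, 1, 1), (0, 0, i), (1, 1, n))}

/-- Horizontal yellow tiles. -/
def yellowH (n : ℤ) : Set Tile :=
  {τ | ∃ i : ℤ, 1 ≤ i ∧ i ≤ n ∧
    τ = ((0, 1, i + 1), (1, 1, 2), (0, 1, i), (1, 1, n + 1))}

/-- Horizontal green tiles. -/
def greenH (n : ℤ) : Set Tile :=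
  {τ | ∃ i : ℤ, 0 ≤ i ∧ i ≤ n ∧
    τ = ((0, 1, i + 1), (1, 1, 1), (0, 0, i), (1, 1, n + 1))}

/-- The three vectors indexing junction tiles. -/
def junctionVecs (n : ℤ) : Set Vec3 := {(0, 0, n), (0, 1, n), (0, 1, n + 1)}

/-- The 7 junction tiles (excluding the two pairs ((0,0,n),(0,1,n+1)) and
((0,1,n+1),(0,0,n))). -/
def junctionT (n : ℤ) : Set Tile :=
  {τ | ∃ u v : Vec3, u ∈ junctionVecs n ∧ v ∈ junctionVecs n ∧
    ¬(u = (0, 0, n) ∧ v = (0, 1, n + 1)) ∧ ¬(u = (0, 1, n + 1) ∧ v = (0, 0, n)) ∧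
    τ = ((0, v.2.2 - n, v.2.1), (0, u.2.2 - n, u.2.1), u, v)}

/-- The metallic mean Wang tile set 𝒯_n, given by its explicit description. -/
def TsetExplicit (n : ℤ) : Set Tile :=
  whiteT n ∪ blueHT n ∪ yellowH n ∪ greenH n ∪
    reflect '' blueHT n ∪ reflect '' yellowH n ∪ reflect '' greenH n ∪ junctionT n

end MetallicMean

/-!
Write `γ = β⁻¹ = β - n ∈ (0, 1)` and `δ = 1 - γ`. In the coordinates `a = {x + β*}`,
`b = {y + β*}` in `[0, 1)`, the left and bottom labels of `TILE_n(x, y)` are `ℓ(a, b)` and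
`ℓ(b, a)`, where `ℓ(a, b) = (1, 1, ⌊βa + b⌋ + 1)` if `b < δ` and
`ℓ(a, b) = (0, ⌊γa + b⌋, ⌊βa + b⌋)` if `δ ≤ b`. The right and top labels are `θ_n` of the left
and bottom ones, i.e. every tile is an instance of the `θ_n`-chip: after rescaling by `γ`, each
floor identity this needs is `⌊1 + c (w - 1)⌋ = ⌊w⌋` for `0 < c ≤ 1` and `0 ≤ w < 2`.
So the tile set is the set of chips over the pairs `(ℓ(a, b), ℓ(b, a))`. Cutting `[0, 1)²` at `δ`
in both coordinates gives the white tiles (`a, b < δ`), the horizontal tiles (`a < δ ≤ b`: blue,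
green or yellow according to `⌊γa + b⌋` and `⌊βb + a⌋`), their reflections and the junction tiles
(`δ ≤ a, b`); conversely every listed tile is attained at an explicit point.
-/

namespace MetallicMean

open Set

lemma beta_pos (n : ℤ) : 0 < beta n := by
  have h : |(n : ℝ)| < √((n : ℝ) ^ 2 + 4) := by
    rw [← Real.sqrt_sq_eq_abs]
    exact Real.sqrt_lt_sqrt (sq_nonneg _) (by linarith)
  unfold beta
  linarith [neg_abs_le (n : ℝ)]

lemma beta_eq_add_inv (n : ℤ) : beta n = n + (beta n)⁻¹ := by
  have hsq : √((n : ℝ) ^ 2 + 4) ^ 2 = (n : ℝ) ^ 2 + 4 := Real.sq_sqrt (by positivity)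
  have hβ : beta n * (beta n - n) = 1 := by unfold beta; linear_combination hsq / 4
  rw [inv_eq_of_mul_eq_one_right hβ]
  ring

lemma betaStar_eq_neg_inv (n : ℤ) : betaStar n = -(beta n)⁻¹ := by
  rw [betaStar]
  linarith [beta_eq_add_inv n]

lemma inv_beta_pos (n : ℤ) : 0 < (beta n)⁻¹ := inv_pos.2 (beta_pos n)

lemma beta_mul_inv (n : ℤ) : beta n * (beta n)⁻¹ = 1 := mul_inv_cancel₀ (beta_pos n).ne'

lemma intCast_mul_inv_beta_add_sq (n : ℤ) : n * (beta n)⁻¹ + (beta n)⁻¹ ^ 2 = 1 := by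
  linear_combination -(beta n)⁻¹ * beta_eq_add_inv n + beta_mul_inv n

lemma inv_beta_lt_one {n : ℤ} (hn : 0 < n) : (beta n)⁻¹ < 1 := by
  have hn1 : (1 : ℝ) ≤ n := by exact_mod_cast hn
  have := beta_eq_add_inv n
  rw [inv_lt_one₀ (beta_pos n)]
  linarith [inv_beta_pos n]

lemma inv_beta_add_sq_le_one {n : ℤ} (hn : 0 < n) : (beta n)⁻¹ + (beta n)⁻¹ ^ 2 ≤ 1 := by
  have hn1 : (1 : ℝ) ≤ n := by exact_mod_cast hn
  nlinarith [intCast_mul_inv_beta_add_sq n, inv_beta_pos n]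

lemma intCast_mul_inv_beta_lt_one {n i : ℤ} (hi : i ≤ n) : (i : ℝ) * (beta n)⁻¹ < 1 := by
  have : (i : ℝ) * (beta n)⁻¹ ≤ n * (beta n)⁻¹ :=
    mul_le_mul_of_nonneg_right (by exact_mod_cast hi) (inv_beta_pos n).le
  nlinarith [intCast_mul_inv_beta_add_sq n, inv_beta_pos n]

lemma floor_one_add_mul_sub_one {R : Type*} [CommRing R] [LinearOrder R] [IsStrictOrderedRing R]
    [FloorRing R] {c w : R} (hc0 : 0 < c) (hc1 : c ≤ 1) (hw0 : 0 ≤ w) (hw2 : w < 2) :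
    ⌊1 + c * (w - 1)⌋ = ⌊w⌋ := by
  rcases lt_or_ge w 1 with hw | hw
  · rw [Int.floor_eq_zero_iff.2 ⟨hw0, hw⟩, Int.floor_eq_zero_iff]
    constructor <;> nlinarith
  · have h1 : ⌊w⌋ = 1 := Int.floor_eq_iff.2 ⟨by exact_mod_cast hw, by push_cast; linarith⟩
    rw [h1, Int.floor_eq_iff]
    constructor <;> push_cast <;> nlinarith

lemma fract_fract_add {R : Type*} [Ring R] [LinearOrder R] [IsStrictOrderedRing R] [FloorRing R]
    (z c : R) : Int.fract (Int.fract z + c) = Int.fract (z + c) :=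
  Int.fract_eq_fract.2 ⟨-⌊z⌋, by rw [Int.fract]; push_cast; abel⟩

/-- For `a, b ∈ [0, 1)`, `label n a b` and `label n b a` are the left and bottom labels of
`TILE_n(a - β*, b - β*)`. -/
noncomputable def label (n : ℤ) (a b : ℝ) : Vec3 := Lam n a (Int.fract (b - betaStar n))

def chip (n : ℤ) (u v : Vec3) : Tile := (theta n u v, theta n v u, u, v)

lemma label_eq (n : ℤ) (a b : ℝ) :
    label n a b =
      (⌊b⌋ + 1 - ⌊b - betaStar n⌋, ⌊(beta n)⁻¹ * a + b⌋ + 1 - ⌊b - betaStar n⌋,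
        ⌊beta n * a + b⌋ + 1 - ⌊b - betaStar n⌋) := by
  have key : ∀ z : ℝ, ⌊z + Int.fract (b - betaStar n) + betaStar n + 1⌋
      = ⌊z + b⌋ + 1 - ⌊b - betaStar n⌋ := fun z => by
    rw [add_sub_assoc, ← Int.floor_add_intCast, Int.fract]
    congr 1
    push_cast
    ring
  have key₀ : ⌊Int.fract (b - betaStar n) + betaStar n + 1⌋ = ⌊b⌋ + 1 - ⌊b - betaStar n⌋ := by
    simpa only [zero_add] using key 0
  simp only [label, Lam, key₀, key]

variable {n : ℤ} {a b : ℝ}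

lemma floor_sub_betaStar_cases (hn : 0 < n) (ha : a ∈ Ico 0 1) :
    a < 1 - (beta n)⁻¹ ∧ ⌊a - betaStar n⌋ = 0 ∨ 1 - (beta n)⁻¹ ≤ a ∧ ⌊a - betaStar n⌋ = 1 := by
  have hγ0 := inv_beta_pos n
  have hγ1 := inv_beta_lt_one hn
  rw [betaStar_eq_neg_inv, sub_neg_eq_add]
  rcases lt_or_ge a (1 - (beta n)⁻¹) with h | h
  · exact Or.inl ⟨h, Int.floor_eq_zero_iff.2 ⟨by linarith [ha.1], by linarith⟩⟩
  · exact Or.inr ⟨h, Int.floor_eq_iff.2 ⟨by push_cast; linarith, by push_cast; linarith [ha.2]⟩⟩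

lemma label_of_lt (ha : a ∈ Ico 0 1) (hb : b ∈ Ico 0 (1 - (beta n)⁻¹)) :
    label n a b = (1, 1, ⌊beta n * a + b⌋ + 1) := by
  have hγ0 := inv_beta_pos n
  have hγa : (beta n)⁻¹ * a < (beta n)⁻¹ := mul_lt_of_lt_one_right hγ0 ha.2
  have hb0 : ⌊b⌋ = 0 := Int.floor_eq_zero_iff.2 ⟨hb.1, by linarith [hb.2]⟩
  have hγb : ⌊(beta n)⁻¹ * a + b⌋ = 0 :=
    Int.floor_eq_zero_iff.2 ⟨by nlinarith [ha.1, hb.1], by linarith [hb.2]⟩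
  have he : ⌊b - betaStar n⌋ = 0 := by
    rw [betaStar_eq_neg_inv, sub_neg_eq_add, Int.floor_eq_zero_iff]
    exact ⟨by linarith [hb.1], by linarith [hb.2]⟩
  simp [label_eq, hb0, hγb, he]

lemma label_of_ge (hn : 0 < n) (hb : b ∈ Ico (1 - (beta n)⁻¹) 1) :
    label n a b = (0, ⌊(beta n)⁻¹ * a + b⌋, ⌊beta n * a + b⌋) := by
  have hγ1 := inv_beta_lt_one hn
  have hb0 : ⌊b⌋ = 0 := Int.floor_eq_zero_iff.2 ⟨by linarith [hb.1], hb.2⟩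
  have he : ⌊b - betaStar n⌋ = 1 := by
    rw [betaStar_eq_neg_inv, sub_neg_eq_add, Int.floor_eq_iff]
    exact ⟨by push_cast; linarith [hb.1], by push_cast; linarith [hb.2]⟩
  simp [label_eq, hb0, he]

lemma beta_mul_sub_mem_Ico (hb : b ∈ Ico (1 - (beta n)⁻¹) 1) :
    beta n * (b - (1 - (beta n)⁻¹)) ∈ Ico 0 1 := by
  have hβ := beta_pos n
  refine ⟨mul_nonneg hβ.le (by linarith [hb.1]), ?_⟩
  calc beta n * (b - (1 - (beta n)⁻¹)) < beta n * (beta n)⁻¹ :=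
        mul_lt_mul_of_pos_left (by linarith [hb.2]) hβ
    _ = 1 := beta_mul_inv n

lemma floor_inv_beta_mul_add (hn : 0 < n) (ha : a ∈ Ico 0 1) (hb : b ∈ Ico (1 - (beta n)⁻¹) 1) :
    ⌊(beta n)⁻¹ * a + b⌋ = ⌊a + beta n * (b - (1 - (beta n)⁻¹))⌋ := by
  obtain ⟨hw0, hw1⟩ := beta_mul_sub_mem_Ico hb
  rw [← floor_one_add_mul_sub_one (w := a + beta n * (b - (1 - (beta n)⁻¹))) (inv_beta_pos n)
    (inv_beta_lt_one hn).le (by linarith [ha.1]) (by linarith [ha.2])]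
  congr 1
  linear_combination (1 - (beta n)⁻¹ - b) * beta_mul_inv n

lemma label_fract_sub_betaStar (hn : 0 < n) (ha : a ∈ Ico 0 1) (hb : b ∈ Ico 0 1) :
    label n (Int.fract (a - betaStar n)) b = theta n (label n a b) (label n b a) := by
  have hγ0 := inv_beta_pos n
  have hβ := beta_eq_add_inv n
  have hβγ := beta_mul_inv n
  set a' := Int.fract (a - betaStar n) with ha'
  have ha'01 : a' ∈ Ico 0 1 := ⟨Int.fract_nonneg _, Int.fract_lt_one _⟩
  have hfa : a' = a + (beta n)⁻¹ - ⌊a - betaStar n⌋ := by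
    rw [ha', Int.fract, betaStar_eq_neg_inv]; ring
  rw [label_eq, label_eq n a, label_eq n b, Int.floor_eq_zero_iff.2 ha,
    Int.floor_eq_zero_iff.2 hb]
  refine Prod.ext rfl (Prod.ext ?_ ?_)
  · rcases floor_sub_betaStar_cases hn hb with ⟨hb', heb⟩ | ⟨hb', heb⟩
    · have := mul_lt_of_lt_one_right hγ0 ha'01.2
      simp only [heb, sub_zero, theta, zero_add, one_ne_zero, ↓reduceIte, add_eq_right,
        Int.floor_eq_zero_iff, mem_Ico]
      exact ⟨add_nonneg (mul_nonneg hγ0.le ha'01.1) hb.1, by linarith⟩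
    · simp only [heb, add_sub_cancel_right, theta, zero_add, sub_self, ↓reduceIte, add_zero]
      have h : a' + beta n * (b - (1 - (beta n)⁻¹)) =
          beta n * b + a + ((1 - ⌊a - betaStar n⌋ - n : ℤ) : ℝ) := by
        push_cast
        rw [hfa]
        linear_combination hβγ - hβ
      rw [floor_inv_beta_mul_add hn ha'01 ⟨hb', hb.2⟩, h, Int.floor_add_intCast]
      ring
  · rcases floor_sub_betaStar_cases hn ha with ⟨ha', hea⟩ | ⟨ha', hea⟩
    · simp only [theta, zero_add, hea, sub_zero, one_ne_zero, ↓reduceIte]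
      rw [hfa, hea, show beta n * (a + (beta n)⁻¹ - ((0 : ℤ) : ℝ)) + b = beta n * a + b + 1 by
        push_cast; linear_combination hβγ, Int.floor_add_one]
      ring
    · simp only [theta, zero_add, hea, add_sub_cancel_right, sub_self, ↓reduceIte]
      have h : a' = a - (1 - (beta n)⁻¹) := by rw [hfa, hea]; push_cast; ring
      rw [floor_inv_beta_mul_add hn hb ⟨ha', ha.2⟩, h, add_comm b, add_sub_assoc]

lemma tileAt_eq_chip (hn : 0 < n) (x y : ℝ) :
    TileAt n x y =
      chip n (label n (Int.fract (x + betaStar n)) (Int.fract (y + betaStar n)))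
        (label n (Int.fract (y + betaStar n)) (Int.fract (x + betaStar n))) := by
  have hmem : ∀ z : ℝ, Int.fract z ∈ Ico 0 1 := fun z => ⟨Int.fract_nonneg z, Int.fract_lt_one z⟩
  rw [chip, ← label_fract_sub_betaStar hn (hmem _) (hmem _),
    ← label_fract_sub_betaStar hn (hmem _) (hmem _)]
  simp only [label, sub_eq_add_neg, fract_fract_add, add_neg_cancel_right]
  rfl

/-- `(u, v)` is the pair of left and bottom labels of some tile `TILE_n(x, y)`. -/
def IsLabelPair (n : ℤ) (u v : Vec3) : Prop :=
  ∃ a b : ℝ, a ∈ Ico 0 1 ∧ b ∈ Ico 0 1 ∧ label n a b = u ∧ label n b a = v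

lemma reflect_chip (u v : Vec3) : reflect (chip n u v) = chip n v u := rfl

lemma IsLabelPair.symm {u v : Vec3} (h : IsLabelPair n u v) : IsLabelPair n v u :=
  let ⟨a, b, ha, hb, hu, hv⟩ := h
  ⟨b, a, hb, ha, hv, hu⟩

lemma exists_tileAt_iff (hn : 0 < n) (τ : Tile) :
    (∃ x y : ℝ, x ∈ Icc 0 1 ∧ y ∈ Icc 0 1 ∧ τ = TileAt n x y) ↔
      ∃ u v : Vec3, IsLabelPair n u v ∧ τ = chip n u v := by
  have hmem : ∀ z : ℝ, Int.fract z ∈ Ico 0 1 := fun z => ⟨Int.fract_nonneg z, Int.fract_lt_one z⟩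
  constructor
  · rintro ⟨x, y, -, -, rfl⟩
    exact ⟨_, _, ⟨_, _, hmem _, hmem _, rfl, rfl⟩, tileAt_eq_chip hn x y⟩
  · rintro ⟨_, _, ⟨a, b, ha, hb, rfl, rfl⟩, rfl⟩
    refine ⟨Int.fract (a - betaStar n), Int.fract (b - betaStar n), Ico_subset_Icc_self (hmem _),
      Ico_subset_Icc_self (hmem _), ?_⟩
    simp only [tileAt_eq_chip hn, fract_fract_add, sub_add_cancel, Int.fract_eq_self.2 ha,
      Int.fract_eq_self.2 hb]

lemma beta_mul_add_lt (ha : a < 1 - (beta n)⁻¹) (hb : b < 1 - (beta n)⁻¹) :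
    beta n * a + b < n := by
  have := mul_lt_mul_of_pos_left ha (beta_pos n)
  linarith [beta_eq_add_inv n, beta_mul_inv n]

lemma chip_label_mem_whiteT (ha : a ∈ Ico 0 (1 - (beta n)⁻¹)) (hb : b ∈ Ico 0 (1 - (beta n)⁻¹)) :
    chip n (label n a b) (label n b a) ∈ whiteT n := by
  have hγ0 := inv_beta_pos n
  have hβ := beta_pos n
  rw [label_of_lt ⟨ha.1, by linarith [ha.2]⟩ hb, label_of_lt ⟨hb.1, by linarith [hb.2]⟩ ha]
  have hI0 : 0 ≤ ⌊beta n * a + b⌋ := Int.floor_nonneg.2 (add_nonneg (mul_nonneg hβ.le ha.1) hb.1)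
  have hJ0 : 0 ≤ ⌊beta n * b + a⌋ := Int.floor_nonneg.2 (add_nonneg (mul_nonneg hβ.le hb.1) ha.1)
  have hI1 : ⌊beta n * a + b⌋ < n := Int.floor_lt.2 (beta_mul_add_lt ha.2 hb.2)
  have hJ1 : ⌊beta n * b + a⌋ < n := Int.floor_lt.2 (beta_mul_add_lt hb.2 ha.2)
  exact ⟨⌊beta n * a + b⌋ + 1, ⌊beta n * b + a⌋ + 1, by omega, by omega, by omega, by omega,
    by simp [chip, theta]⟩

lemma chip_label_mem_horizontal (hn : 0 < n) (ha : a ∈ Ico 0 (1 - (beta n)⁻¹))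
    (hb : b ∈ Ico (1 - (beta n)⁻¹) 1) :
    chip n (label n a b) (label n b a) ∈ blueHT n ∨ chip n (label n a b) (label n b a) ∈ yellowH n ∨
      chip n (label n a b) (label n b a) ∈ greenH n := by
  have hγ0 := inv_beta_pos n
  have hγ1 := inv_beta_lt_one hn
  have hβ := beta_eq_add_inv n
  have hβγ := beta_mul_inv n
  have hn1 : (1 : ℝ) ≤ n := by exact_mod_cast hn
  have hb0 : 0 ≤ b := by linarith [hb.1]
  rw [label_of_ge hn hb, label_of_lt ⟨hb0, hb.2⟩ ha]
  have hβa := mul_lt_mul_of_pos_left ha.2 (beta_pos n)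
  have hβb := mul_le_mul_of_nonneg_left hb.1 (beta_pos n).le
  have hI0 : 0 ≤ ⌊beta n * a + b⌋ := Int.floor_nonneg.2 (by nlinarith [ha.1])
  have hI1 : ⌊beta n * a + b⌋ ≤ n := Int.floor_le_iff.2 (by nlinarith [hb.2])
  rcases lt_or_ge ((beta n)⁻¹ * a + b) 1 with hK | hK
  · have hK0 : ⌊(beta n)⁻¹ * a + b⌋ = 0 := Int.floor_eq_zero_iff.2 ⟨by nlinarith [ha.1], hK⟩
    rcases lt_or_ge (beta n * b + a) n with hJ | hJ
    · have hJn : ⌊beta n * b + a⌋ = n - 1 :=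
        Int.floor_eq_iff.2 ⟨by push_cast; nlinarith [ha.1], by push_cast; linarith⟩
      -- `b < γ (n - a)`, so `βa + b < n (a + γ) < n`
      have hIn : ⌊beta n * a + b⌋ < n := Int.floor_lt.2 (by nlinarith [ha.1])
      left
      exact ⟨_, hI0, by omega, by simp [chip, theta, hK0, hJn]⟩
    · have hJn : ⌊beta n * b + a⌋ = n :=
        Int.floor_eq_iff.2 ⟨hJ, by nlinarith [hb.2]⟩
      right; right
      exact ⟨_, hI0, hI1, by simp [chip, theta, hK0, hJn]⟩
  · have hK1 : ⌊(beta n)⁻¹ * a + b⌋ = 1 :=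
      Int.floor_eq_iff.2 ⟨by push_cast; linarith, by push_cast; nlinarith [hb.2]⟩
    -- multiplying `1 ≤ γa + b` by `β` gives `β ≤ βb + a`
    have hJn : ⌊beta n * b + a⌋ = n :=
      Int.floor_eq_iff.2 ⟨by nlinarith, by nlinarith [hb.2]⟩
    have hI1' : 1 ≤ ⌊beta n * a + b⌋ := Int.le_floor.2 (by push_cast; nlinarith [ha.1])
    right; left
    exact ⟨_, hI1', hI1, by simp [chip, theta, hK1, hJn]⟩

lemma floor_cases_of_ge (hn : 0 < n) (ha : a ∈ Ico (1 - (beta n)⁻¹) 1)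
    (hb : b ∈ Ico (1 - (beta n)⁻¹) 1) :
    ⌊(beta n)⁻¹ * a + b⌋ = 0 ∧ ⌊beta n * a + b⌋ = n ∧ ⌊beta n * b + a⌋ = n ∨
      ⌊(beta n)⁻¹ * a + b⌋ = 1 ∧ (⌊beta n * a + b⌋ = n ∨ ⌊beta n * a + b⌋ = n + 1) := by
  have hγ0 := inv_beta_pos n
  have hγ1 := inv_beta_lt_one hn
  have hβ := beta_eq_add_inv n
  have hβγ := beta_mul_inv n
  have hn1 : (1 : ℝ) ≤ n := by exact_mod_cast hn
  have hβa := mul_le_mul_of_nonneg_left ha.1 (beta_pos n).le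
  have hβb := mul_le_mul_of_nonneg_left hb.1 (beta_pos n).le
  have hI0 : n ≤ ⌊beta n * a + b⌋ := Int.le_floor.2 (by linarith [hb.1])
  rcases lt_or_ge ((beta n)⁻¹ * a + b) 1 with hK | hK
  · refine Or.inl ⟨Int.floor_eq_zero_iff.2 ⟨by nlinarith, hK⟩,
      Int.floor_eq_iff.2 ⟨by linarith [hb.1], by nlinarith [ha.2]⟩,
      Int.floor_eq_iff.2 ⟨by linarith [ha.1], ?_⟩⟩
    -- otherwise `γa + b ≥ γ (n + 1) = 1 + γ - γ² > 1`
    by_contra! hJ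
    have := mul_le_mul_of_nonneg_left hJ hγ0.le
    nlinarith
  · have hI2 : ⌊beta n * a + b⌋ < n + 2 := Int.floor_lt.2 (by push_cast; nlinarith [ha.2, hb.2])
    exact Or.inr ⟨Int.floor_eq_iff.2 ⟨by push_cast; linarith, by push_cast; nlinarith [ha.2, hb.2]⟩,
      by omega⟩

lemma chip_label_mem_junctionT (hn : 0 < n) (ha : a ∈ Ico (1 - (beta n)⁻¹) 1)
    (hb : b ∈ Ico (1 - (beta n)⁻¹) 1) : chip n (label n a b) (label n b a) ∈ junctionT n := by
  rw [label_of_ge hn hb, label_of_ge hn ha]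
  have hab := floor_cases_of_ge hn ha hb
  have hba := floor_cases_of_ge hn hb ha
  refine ⟨(0, ⌊(beta n)⁻¹ * a + b⌋, ⌊beta n * a + b⌋), (0, ⌊(beta n)⁻¹ * b + a⌋, ⌊beta n * b + a⌋),
    ?_, ?_, ?_, ?_, by simp [chip, theta]⟩ <;>
    simp only [junctionVecs, mem_insert_iff, mem_singleton_iff, Prod.mk.injEq, true_and] <;> omega

lemma chip_label_mem_tsetExplicit (hn : 0 < n) (ha : a ∈ Ico 0 1) (hb : b ∈ Ico 0 1) :
    chip n (label n a b) (label n b a) ∈ TsetExplicit n := by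
  have hreflect : ∀ S : Set Tile, chip n (label n b a) (label n a b) ∈ S →
      chip n (label n a b) (label n b a) ∈ reflect '' S := fun _ hS => ⟨_, hS, reflect_chip _ _⟩
  simp only [TsetExplicit, mem_union]
  rcases lt_or_ge a (1 - (beta n)⁻¹) with ha' | ha' <;>
    rcases lt_or_ge b (1 - (beta n)⁻¹) with hb' | hb'
  · have := chip_label_mem_whiteT ⟨ha.1, ha'⟩ ⟨hb.1, hb'⟩
    tauto
  · have := chip_label_mem_horizontal hn ⟨ha.1, ha'⟩ ⟨hb', hb.2⟩
    tauto
  · rcases chip_label_mem_horizontal hn ⟨hb.1, hb'⟩ ⟨ha', ha.2⟩ with h | h | h <;>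
    · have := hreflect _ h
      tauto
  · have := chip_label_mem_junctionT hn ⟨ha', ha.2⟩ ⟨hb', hb.2⟩
    tauto

lemma isLabelPair_of_lt {i j : ℤ} (ha : a ∈ Ico 0 (1 - (beta n)⁻¹))
    (hb : b ∈ Ico 0 (1 - (beta n)⁻¹)) (hi : ⌊beta n * a + b⌋ = i - 1)
    (hj : ⌊beta n * b + a⌋ = j - 1) : IsLabelPair n (1, 1, i) (1, 1, j) := by
  have hγ0 := inv_beta_pos n
  have ha1 : a ∈ Ico 0 1 := ⟨ha.1, by linarith [ha.2]⟩
  have hb1 : b ∈ Ico 0 1 := ⟨hb.1, by linarith [hb.2]⟩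
  refine ⟨a, b, ha1, hb1, ?_, ?_⟩
  · rw [label_of_lt ha1 hb, hi, sub_add_cancel]
  · rw [label_of_lt hb1 ha, hj, sub_add_cancel]

lemma isLabelPair_of_lt_of_ge (hn : 0 < n) {k i j : ℤ} (ha : a ∈ Ico 0 (1 - (beta n)⁻¹))
    (hb : b ∈ Ico (1 - (beta n)⁻¹) 1) (hk : ⌊(beta n)⁻¹ * a + b⌋ = k)
    (hi : ⌊beta n * a + b⌋ = i) (hj : ⌊beta n * b + a⌋ = j - 1) :
    IsLabelPair n (0, k, i) (1, 1, j) := by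
  have hγ0 := inv_beta_pos n
  have hγ1 := inv_beta_lt_one hn
  have ha1 : a ∈ Ico 0 1 := ⟨ha.1, by linarith [ha.2]⟩
  have hb1 : b ∈ Ico 0 1 := ⟨by linarith [hb.1], hb.2⟩
  refine ⟨a, b, ha1, hb1, ?_, ?_⟩
  · rw [label_of_ge hn hb, hk, hi]
  · rw [label_of_lt hb1 ha, hj, sub_add_cancel]

/-- Junction labels in the coordinates `a = 1 - β⁻¹ + s`, `b = 1 - β⁻¹ + t`. -/
lemma isLabelPair_of_ge (hn : 0 < n) {s t : ℝ} {k i l j : ℤ} (hs : s ∈ Ico 0 (beta n)⁻¹)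
    (ht : t ∈ Ico 0 (beta n)⁻¹) (hk : ⌊(beta n)⁻¹ * s + t - (beta n)⁻¹ ^ 2⌋ = k - 1)
    (hi : ⌊beta n * s + t⌋ = i - n) (hl : ⌊(beta n)⁻¹ * t + s - (beta n)⁻¹ ^ 2⌋ = l - 1)
    (hj : ⌊beta n * t + s⌋ = j - n) : IsLabelPair n (0, k, i) (0, l, j) := by
  have hγ1 := inv_beta_lt_one hn
  have hβ := beta_eq_add_inv n
  have hβγ := beta_mul_inv n
  have hmem : ∀ {s : ℝ}, s ∈ Ico 0 (beta n)⁻¹ → 1 - (beta n)⁻¹ + s ∈ Ico 0 1 :=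
    fun hs => ⟨by linarith [hs.1], by linarith [hs.2]⟩
  have hlabel : ∀ {s t : ℝ}, t ∈ Ico 0 (beta n)⁻¹ →
      label n (1 - (beta n)⁻¹ + s) (1 - (beta n)⁻¹ + t) =
        (0, ⌊(beta n)⁻¹ * s + t - (beta n)⁻¹ ^ 2⌋ + 1, n + ⌊beta n * s + t⌋) := fun ht => by
    rw [label_of_ge hn ⟨by linarith [ht.1], by linarith [ht.2]⟩, ← Int.floor_add_one,
      ← Int.floor_intCast_add]
    congr 3
    · ring
    · linear_combination hβ - hβγ
  refine ⟨_, _, hmem hs, hmem ht, ?_, ?_⟩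
  · rw [hlabel ht, hk, hi, sub_add_cancel, add_sub_cancel]
  · rw [hlabel hs, hl, hj, sub_add_cancel, add_sub_cancel]

lemma isLabelPair_white {i j : ℤ} (hi : i ∈ Icc 1 n) (hj : j ∈ Icc 1 n) :
    IsLabelPair n (1, 1, i) (1, 1, j) := by
  have hγ0 := inv_beta_pos n
  have hβγ := beta_mul_inv n
  have hi1 : (1 : ℝ) ≤ i := by exact_mod_cast hi.1
  have hj1 : (1 : ℝ) ≤ j := by exact_mod_cast hj.1
  have hiγ := intCast_mul_inv_beta_lt_one hi.2
  have hjγ := intCast_mul_inv_beta_lt_one hj.2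
  have hfloor : ∀ {i j : ℤ}, (1 : ℝ) ≤ j → (j : ℝ) * (beta n)⁻¹ < 1 →
      ⌊beta n * ((i - 1) * (beta n)⁻¹) + (j - 1) * (beta n)⁻¹⌋ = i - 1 := fun hj1 hjγ => by
    rw [mul_left_comm, hβγ, mul_one, ← Int.cast_one, ← Int.cast_sub, Int.floor_intCast_add,
      add_eq_left, Int.floor_eq_zero_iff]
    exact ⟨by nlinarith, by linarith⟩
  exact isLabelPair_of_lt (a := (i - 1) * (beta n)⁻¹) (b := (j - 1) * (beta n)⁻¹)
    ⟨by nlinarith, by linarith⟩ ⟨by nlinarith, by linarith⟩ (hfloor hj1 hjγ) (hfloor hi1 hiγ)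

lemma isLabelPair_blue (hn : 0 < n) {i : ℤ} (hi : i ∈ Icc 0 (n - 1)) :
    IsLabelPair n (0, 0, i) (1, 1, n) := by
  have hγ0 := inv_beta_pos n
  have hγ1 := inv_beta_lt_one hn
  have hβ := beta_eq_add_inv n
  have hβγ := beta_mul_inv n
  have hi0 : (0 : ℝ) ≤ i := by exact_mod_cast hi.1
  have hiγ : ((i : ℝ) + 1) * (beta n)⁻¹ < 1 := by
    exact_mod_cast intCast_mul_inv_beta_lt_one (show i + 1 ≤ n by linarith [hi.2])
  have e : beta n * (i * (beta n)⁻¹) = i := by rw [mul_left_comm, hβγ, mul_one]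
  exact isLabelPair_of_lt_of_ge hn (a := i * (beta n)⁻¹) (b := 1 - (beta n)⁻¹)
    ⟨by positivity, by linarith⟩ ⟨le_rfl, by linarith⟩
    (Int.floor_eq_zero_iff.2 ⟨by nlinarith, by nlinarith⟩)
    (Int.floor_eq_iff.2 ⟨by linarith, by linarith⟩)
    (Int.floor_eq_iff.2 ⟨by push_cast; nlinarith, by push_cast; nlinarith⟩)

lemma isLabelPair_green (hn : 0 < n) {i : ℤ} (hi : i ∈ Icc 0 n) :
    IsLabelPair n (0, 0, i) (1, 1, n + 1) := by
  have hγ0 := inv_beta_pos n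
  have hγ1 := inv_beta_lt_one hn
  have hβ := beta_eq_add_inv n
  have hβγ := beta_mul_inv n
  have e2 : beta n * (beta n)⁻¹ ^ 2 = (beta n)⁻¹ := by rw [sq, ← mul_assoc, hβγ, one_mul]
  rcases hi.2.lt_or_eq with hin | hin
  · have hi0 : (0 : ℝ) ≤ i := by exact_mod_cast hi.1
    have hiγ : ((i : ℝ) + 1) * (beta n)⁻¹ < 1 := by
      exact_mod_cast intCast_mul_inv_beta_lt_one (show i + 1 ≤ n by omega)
    have e : beta n * (i * (beta n)⁻¹) = i := by rw [mul_left_comm, hβγ, mul_one]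
    exact isLabelPair_of_lt_of_ge hn (a := i * (beta n)⁻¹) (b := 1 - (i + 1) * (beta n)⁻¹ ^ 2)
      ⟨by positivity, by linarith⟩ ⟨by nlinarith, by nlinarith⟩
      (Int.floor_eq_zero_iff.2 ⟨by nlinarith, by nlinarith⟩)
      (Int.floor_eq_iff.2 ⟨by nlinarith, by nlinarith⟩)
      (Int.floor_eq_iff.2 ⟨by push_cast; nlinarith, by push_cast; nlinarith⟩)
  · rw [hin]
    have hγγ := inv_beta_add_sq_le_one hn
    have g3 : (beta n)⁻¹ ^ 3 < (beta n)⁻¹ ^ 2 := by nlinarith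
    have g4 : 0 < (beta n)⁻¹ ^ 4 := by positivity
    have e3 : beta n * (beta n)⁻¹ ^ 3 = (beta n)⁻¹ ^ 2 := by
      rw [pow_succ' _ 2, ← mul_assoc, hβγ, one_mul]
    exact isLabelPair_of_lt_of_ge hn (a := 1 - (beta n)⁻¹ - (beta n)⁻¹ ^ 3)
      (b := 1 - (beta n)⁻¹ + (beta n)⁻¹ ^ 2)
      ⟨by nlinarith, by nlinarith⟩ ⟨by nlinarith, by nlinarith⟩
      (Int.floor_eq_zero_iff.2 ⟨by nlinarith, by nlinarith⟩)
      (Int.floor_eq_iff.2 ⟨by nlinarith, by nlinarith⟩)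
      (Int.floor_eq_iff.2 ⟨by push_cast; nlinarith, by push_cast; nlinarith⟩)

lemma isLabelPair_yellow (hn : 0 < n) {i : ℤ} (hi : i ∈ Icc 1 n) :
    IsLabelPair n (0, 1, i) (1, 1, n + 1) := by
  have hγ0 := inv_beta_pos n
  have hγ1 := inv_beta_lt_one hn
  have hβ := beta_eq_add_inv n
  have hβγ := beta_mul_inv n
  have e2 : beta n * (beta n)⁻¹ ^ 2 = (beta n)⁻¹ := by rw [sq, ← mul_assoc, hβγ, one_mul]
  rcases hi.2.lt_or_eq with hin | hin
  · have hi1 : (1 : ℝ) ≤ i := by exact_mod_cast hi.1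
    have hiγ : ((i : ℝ) + 1) * (beta n)⁻¹ < 1 := by
      exact_mod_cast intCast_mul_inv_beta_lt_one (show i + 1 ≤ n by omega)
    have e : beta n * (i * (beta n)⁻¹) = i := by rw [mul_left_comm, hβγ, mul_one]
    exact isLabelPair_of_lt_of_ge hn (a := i * (beta n)⁻¹) (b := 1 - i * (beta n)⁻¹ ^ 2)
      ⟨by positivity, by linarith⟩ ⟨by nlinarith, by nlinarith⟩
      (Int.floor_eq_iff.2 ⟨by push_cast; nlinarith, by push_cast; nlinarith⟩)
      (Int.floor_eq_iff.2 ⟨by nlinarith, by nlinarith⟩)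
      (Int.floor_eq_iff.2 ⟨by push_cast; nlinarith, by push_cast; nlinarith⟩)
  · rw [hin]
    have hγγ := inv_beta_add_sq_le_one hn
    have g3 : (beta n)⁻¹ ^ 3 < (beta n)⁻¹ ^ 2 := by nlinarith
    have g4 : 0 < (beta n)⁻¹ ^ 4 := by positivity
    have e3 : beta n * (beta n)⁻¹ ^ 3 = (beta n)⁻¹ ^ 2 := by
      rw [pow_succ' _ 2, ← mul_assoc, hβγ, one_mul]
    have e4 : beta n * (beta n)⁻¹ ^ 4 = (beta n)⁻¹ ^ 3 := by
      rw [pow_succ' _ 3, ← mul_assoc, hβγ, one_mul]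
    exact isLabelPair_of_lt_of_ge hn (a := 1 - (beta n)⁻¹ - (beta n)⁻¹ ^ 3)
      (b := 1 - (beta n)⁻¹ + (beta n)⁻¹ ^ 2 + (beta n)⁻¹ ^ 4)
      ⟨by nlinarith, by nlinarith⟩ ⟨by nlinarith, by nlinarith⟩
      (Int.floor_eq_iff.2 ⟨by push_cast; nlinarith, by push_cast; nlinarith⟩)
      (Int.floor_eq_iff.2 ⟨by nlinarith, by nlinarith⟩)
      (Int.floor_eq_iff.2 ⟨by push_cast; nlinarith, by push_cast; nlinarith⟩)

lemma isLabelPair_junction (hn : 0 < n) {u v : Vec3} (hu : u ∈ junctionVecs n)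
    (hv : v ∈ junctionVecs n) (h₁ : ¬(u = (0, 0, n) ∧ v = (0, 1, n + 1)))
    (h₂ : ¬(u = (0, 1, n + 1) ∧ v = (0, 0, n))) : IsLabelPair n u v := by
  have hγ0 := inv_beta_pos n
  have hγ1 := inv_beta_lt_one hn
  have hβγ := beta_mul_inv n
  have g2 : (beta n)⁻¹ ^ 2 < (beta n)⁻¹ := by nlinarith
  have e2 : beta n * (beta n)⁻¹ ^ 2 = (beta n)⁻¹ := by rw [sq, ← mul_assoc, hβγ, one_mul]
  have hdiag : ∀ {s : ℝ} {k i : ℤ}, s ∈ Ico 0 (beta n)⁻¹ →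
      ⌊(beta n)⁻¹ * s + s - (beta n)⁻¹ ^ 2⌋ = k - 1 → ⌊beta n * s + s⌋ = i - n →
      IsLabelPair n (0, k, i) (0, k, i) := fun hs hk hi => isLabelPair_of_ge hn hs hs hk hi hk hi
  have hAA : IsLabelPair n (0, 0, n) (0, 0, n) :=
    hdiag (s := 0) ⟨le_rfl, hγ0⟩
      (Int.floor_eq_iff.2 ⟨by push_cast; nlinarith, by push_cast; nlinarith⟩) (by simp)
  have hBB : IsLabelPair n (0, 1, n) (0, 1, n) :=
    hdiag (s := (beta n)⁻¹ / 2) ⟨by positivity, by linarith⟩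
      (Int.floor_eq_iff.2 ⟨by push_cast; nlinarith, by push_cast; nlinarith⟩)
      (Int.floor_eq_iff.2 ⟨by push_cast; nlinarith, by push_cast; nlinarith⟩)
  have hCC : IsLabelPair n (0, 1, n + 1) (0, 1, n + 1) :=
    hdiag (s := (beta n)⁻¹ - (beta n)⁻¹ ^ 2 / 2) ⟨by nlinarith, by nlinarith⟩
      (Int.floor_eq_iff.2 ⟨by push_cast; nlinarith, by push_cast; nlinarith⟩)
      (Int.floor_eq_iff.2 ⟨by push_cast; nlinarith, by push_cast; nlinarith⟩)
  have hAB : IsLabelPair n (0, 0, n) (0, 1, n) :=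
    isLabelPair_of_ge hn (s := (beta n)⁻¹ ^ 2) (t := 0) ⟨by positivity, g2⟩ ⟨le_rfl, hγ0⟩
      (Int.floor_eq_iff.2 ⟨by push_cast; nlinarith, by push_cast; nlinarith⟩)
      (Int.floor_eq_iff.2 ⟨by push_cast; nlinarith, by push_cast; nlinarith⟩)
      (Int.floor_eq_iff.2 ⟨by push_cast; nlinarith, by push_cast; nlinarith⟩)
      (Int.floor_eq_iff.2 ⟨by push_cast; nlinarith, by push_cast; nlinarith⟩)
  have hBC : IsLabelPair n (0, 1, n) (0, 1, n + 1) :=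
    isLabelPair_of_ge hn (s := (beta n)⁻¹ / 2) (t := (beta n)⁻¹ - (beta n)⁻¹ ^ 2 / 2)
      ⟨by positivity, by linarith⟩ ⟨by nlinarith, by nlinarith⟩
      (Int.floor_eq_iff.2 ⟨by push_cast; nlinarith, by push_cast; nlinarith⟩)
      (Int.floor_eq_iff.2 ⟨by push_cast; nlinarith, by push_cast; nlinarith⟩)
      (Int.floor_eq_iff.2 ⟨by push_cast; nlinarith, by push_cast; nlinarith⟩)
      (Int.floor_eq_iff.2 ⟨by push_cast; nlinarith, by push_cast; nlinarith⟩)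
  simp only [junctionVecs, mem_insert_iff, mem_singleton_iff] at hu hv
  rcases hu with rfl | rfl | rfl <;> rcases hv with rfl | rfl | rfl
  exacts [hAA, hAB, (h₁ ⟨rfl, rfl⟩).elim, hAB.symm, hBB, hBC, (h₂ ⟨rfl, rfl⟩).elim, hBC.symm, hCC]

lemma fst_eq_zero_of_mem_junctionVecs {u : Vec3} (hu : u ∈ junctionVecs n) : u.1 = 0 := by
  simp only [junctionVecs, mem_insert_iff, mem_singleton_iff] at hu
  rcases hu with rfl | rfl | rfl <;> rfl

lemma exists_isLabelPair_of_mem_tsetExplicit (hn : 0 < n) {τ : Tile} (hτ : τ ∈ TsetExplicit n) :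
    ∃ u v : Vec3, IsLabelPair n u v ∧ τ = chip n u v := by
  simp only [TsetExplicit, mem_union, mem_image] at hτ
  rcases hτ with ((((((⟨i, j, hi₁, hi₂, hj₁, hj₂, rfl⟩ | ⟨i, hi₁, hi₂, rfl⟩) | ⟨i, hi₁, hi₂, rfl⟩) |
    ⟨i, hi₁, hi₂, rfl⟩) | ⟨_, ⟨i, hi₁, hi₂, rfl⟩, rfl⟩) | ⟨_, ⟨i, hi₁, hi₂, rfl⟩, rfl⟩) |
    ⟨_, ⟨i, hi₁, hi₂, rfl⟩, rfl⟩) | ⟨u, v, hu, hv, h₁, h₂, rfl⟩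
  · exact ⟨_, _, isLabelPair_white ⟨hi₁, hi₂⟩ ⟨hj₁, hj₂⟩, by simp [chip, theta]⟩
  · exact ⟨_, _, isLabelPair_blue hn ⟨hi₁, hi₂⟩, by simp [chip, theta]⟩
  · exact ⟨_, _, isLabelPair_yellow hn ⟨hi₁, hi₂⟩, by simp [chip, theta]⟩
  · exact ⟨_, _, isLabelPair_green hn ⟨hi₁, hi₂⟩, by simp [chip, theta]⟩
  · exact ⟨_, _, (isLabelPair_blue hn ⟨hi₁, hi₂⟩).symm, by rw [← reflect_chip]; simp [chip, theta]⟩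
  · exact ⟨_, _, (isLabelPair_yellow hn ⟨hi₁, hi₂⟩).symm, by rw [← reflect_chip]; simp [chip, theta]⟩
  · exact ⟨_, _, (isLabelPair_green hn ⟨hi₁, hi₂⟩).symm, by rw [← reflect_chip]; simp [chip, theta]⟩
  · refine ⟨u, v, isLabelPair_junction hn hu hv h₁ h₂, ?_⟩
    simp [chip, theta, fst_eq_zero_of_mem_junctionVecs hu, fst_eq_zero_of_mem_junctionVecs hv]

/-- For every integer n ≥ 1, the metallic mean Wang tile set (given by its
explicit description) equals the image of the unit square under the tile map:
𝒯_n = {TILE_n(x,y) : (x,y) ∈ [0,1]²}. -/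
theorem statement10 (n : ℤ) (hn : 1 ≤ n) :
    TsetExplicit n =
      {τ : Tile | ∃ x y : ℝ, x ∈ Set.Icc (0 : ℝ) 1 ∧ y ∈ Set.Icc (0 : ℝ) 1 ∧
        τ = TileAt n x y} := by
  ext τ
  refine ⟨fun hτ => (exists_tileAt_iff hn τ).2 (exists_isLabelPair_of_mem_tsetExplicit hn hτ),
    fun hτ => ?_⟩
  obtain ⟨_, _, ⟨a, b, ha, hb, rfl, rfl⟩, rfl⟩ := (exists_tileAt_iff hn τ).1 hτ
  exact chip_label_mem_tsetExplicit hn ha hb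

end MetallicMean
end
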